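/- The set of models of the Horn formulas entailed by an arbitrary propositional formula φ equals the intersection-closure of the set of models of φ. That is, mod({h Horn clause | φ ⊨ h}) = cl(mod(φ)), where cl denotes closure under (nonempty) intersections. -/

import Mathlib

/-- A Horn clause: an antecedent (set of variables) and a consequent
which is either a variable (`some q`) or falsum `⊥` (`none`). -/
structure HornClause (V : Type*) where
  ant : Set V
  con : Option V

/-- A model `x ⊆ V` satisfies a Horn clause. -/
def HornClause.sat {V : Type*} (x : Set V) (h : HornClause V) : Prop :=
  ¬ h.ant ⊆ x ∨ ∃ q, h.con = some q ∧ q ∈ x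

/-- Closure of a family of models under intersections of nonempty subfamilies. -/
def interClosure {V : Type*} (M : Set (Set V)) : Set (Set V) :=
  {x | ∃ N ⊆ M, N.Nonempty ∧ x = ⋂₀ N}

/-- Propositional formulas over variables `V`. -/
inductive Form (V : Type*) where
  | var : V → Form V
  | tru : Form V
  | fls : Form V
  | neg : Form V → Form V
  | conj : Form V → Form V → Form V
  | disj : Form V → Form V → Form V
  | impl : Form V → Form V → Form V

/-- Satisfaction of a propositional formula by a model `x ⊆ V`. -/
def Form.sat {V : Type*} (x : Set V) : Form V → Prop
  | .var v => v ∈ x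
  | .tru => True
  | .fls => False
  | .neg φ => ¬ φ.sat x
  | .conj φ ψ => φ.sat x ∧ ψ.sat x
  | .disj φ ψ => φ.sat x ∨ ψ.sat x
  | .impl φ ψ => φ.sat x → ψ.sat x

/-!
Horn clauses are preserved under nonempty intersections, so the models of the Horn
consequences of `φ` contain `cl(mod φ)`. Conversely, a model `x` of all these consequences
is the intersection of the models of `φ` above it: the clause `x → ⊥` shows that there is
such a model, and for `q ∉ x` the clause `x → q` shows that one of them omits `q`.
-/

section

variable {V : Type*}

namespace HornClause

theorem sat_mk_none {x A : Set V} : HornClause.sat x ⟨A, none⟩ ↔ ¬ A ⊆ x := by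
  simp [HornClause.sat]

theorem sat_mk_some {x A : Set V} {q : V} :
    HornClause.sat x ⟨A, some q⟩ ↔ (A ⊆ x → q ∈ x) := by
  simp [HornClause.sat, imp_iff_not_or]

theorem sat_sInter {N : Set (Set V)} (hN : N.Nonempty) {h : HornClause V}
    (hsat : ∀ y ∈ N, HornClause.sat y h) : HornClause.sat (⋂₀ N) h := by
  obtain ⟨A, _ | q⟩ := h
  · obtain ⟨y, hy⟩ := hN
    exact sat_mk_none.2 fun hA => sat_mk_none.1 (hsat y hy) (hA.trans (Set.sInter_subset_of_mem hy))
  · exact sat_mk_some.2 fun hA => Set.mem_sInter.2 fun y hy =>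
      sat_mk_some.1 (hsat y hy) (hA.trans (Set.sInter_subset_of_mem hy))

end HornClause

def hornTheoryModels (M : Set (Set V)) : Set (Set V) :=
  {x | ∀ h : HornClause V, (∀ y ∈ M, HornClause.sat y h) → HornClause.sat x h}

theorem interClosure_subset_hornTheoryModels (M : Set (Set V)) :
    interClosure M ⊆ hornTheoryModels M := by
  rintro _ ⟨N, hNM, hN, rfl⟩ h hM
  exact HornClause.sat_sInter hN fun y hy => hM y (hNM hy)

theorem eq_sInter_of_mem_hornTheoryModels {M : Set (Set V)} {x : Set V}
    (hx : x ∈ hornTheoryModels M) :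
    {y ∈ M | x ⊆ y}.Nonempty ∧ x = ⋂₀ {y ∈ M | x ⊆ y} := by
  refine ⟨?_, (Set.subset_sInter fun y hy => hy.2).antisymm fun q hq => ?_⟩
  · by_contra hempty
    have hentailed : ∀ y ∈ M, HornClause.sat y ⟨x, none⟩ :=
      fun y hy => HornClause.sat_mk_none.2 fun hxy => hempty ⟨y, hy, hxy⟩
    exact HornClause.sat_mk_none.1 (hx _ hentailed) subset_rfl
  · have hentailed : ∀ y ∈ M, HornClause.sat y ⟨x, some q⟩ :=
      fun y hy => HornClause.sat_mk_some.2 fun hxy => Set.mem_sInter.1 hq y ⟨hy, hxy⟩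
    exact HornClause.sat_mk_some.1 (hx _ hentailed) subset_rfl

theorem hornTheoryModels_eq_interClosure (M : Set (Set V)) :
    hornTheoryModels M = interClosure M := by
  refine Set.Subset.antisymm (fun x hx => ?_) (interClosure_subset_hornTheoryModels M)
  obtain ⟨hne, hx_eq⟩ := eq_sInter_of_mem_hornTheoryModels hx
  exact ⟨_, fun y hy => hy.1, hne, hx_eq⟩

end

theorem stmt4_general {V : Type*} (φ : Form V) :
    {x : Set V | ∀ h : HornClause V,
        (∀ y : Set V, Form.sat y φ → HornClause.sat y h) → HornClause.sat x h}
      = interClosure {x : Set V | Form.sat x φ} :=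
  hornTheoryModels_eq_interClosure {x | Form.sat x φ}

theorem stmt4 {V : Type*} [Fintype V] [Nonempty V] (φ : Form V) :
    {x : Set V | ∀ h : HornClause V,
        (∀ y : Set V, Form.sat y φ → HornClause.sat y h) → HornClause.sat x h}
      = interClosure {x : Set V | Form.sat x φ} :=
  stmt4_general φ
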